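/- arXiv:1104.4039 — 4 statements merged into one kernel-verified Lean document; each statement's English description precedes it below -/
import Mathlib

section
/- Let N be a monotone Boolean automata network and x → y an elementary transition (∅ ≠ Δ(x,y) ⊆ U(x), where Δ is the set of differing coordinates). Suppose the digraph H = (Δ(x,y), FRUS(x) restricted to Δ(x,y)) is acyclic. Then the transition x → y is totally sequentialisable: there exists an ordering i_1, ..., i_m of Δ(x,y) such that each intermediate step is an asynchronous transition, i.e., setting x(0) = x and x(t+1) = x(t) with coordinate i_{t+1} flipped, for every t < m the automaton i_{t+1} is unstable in x(t). -/
namespace BAN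

/-- A configuration of a Boolean automata network of size `n`. -/
abbrev Config (n : ℕ) := Fin n → Bool

/-- `s(b) = 2b - 1 ∈ {-1,1}`. -/
def sgn (b : Bool) : ℤ := if b then 1 else -1

/-- Boolean as integer `0/1`. -/
def bint (b : Bool) : ℤ := if b then 1 else 0

/-- `x̄^i` : `x` with coordinate `i` flipped. -/
def flip {n : ℕ} (x : Config n) (i : Fin n) : Config n := Function.update x i (!x i)

/-- A Boolean automata network of size `n`: the family of local transition functions. -/
def Net (n : ℕ) := Fin n → Config n → Bool

/-- `f i` is positively (locally) monotone in coordinate `j`: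
`s(x_j)·(f_i(x) − f_i(x̄^j)) ≥ 0` for all `x`. -/
def posIn {n : ℕ} (f : Net n) (i j : Fin n) : Prop :=
  ∀ x : Config n, 0 ≤ sgn (x j) * (bint (f i x) - bint (f i (flip x j)))

/-- `f i` is negatively (locally) monotone in coordinate `j`. -/
def negIu {n : ℕ} (f : Net n) (i j : Fin n) : Prop :=
  ∀ x : Config n, sgn (x j) * (bint (f i x) - bint (f i (flip x j))) ≤ 0

/-- The network is (locally) monotone. -/
def MonotoneNet {n : ℕ} (f : Net n) : Prop := ∀ i j, posIn f i j ∨ negIu f i j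

/-- `(j,i)` is an arc of the interaction graph: `f i` depends on coordinate `j`. -/
def arc {n : ℕ} (f : Net n) (j i : Fin n) : Prop := ∃ x, f i x ≠ f i (flip x j)

/-- The arc `(j,i)` exists and has sign `s` (`+1` or `-1`). -/
def hasSign {n : ℕ} (f : Net n) (j i : Fin n) (s : ℤ) : Prop :=
  arc f j i ∧ ((s = 1 ∧ posIn f i j) ∨ (s = -1 ∧ negIu f i j))

/-- Automaton `i` is unstable in `x`. -/
def unstable {n : ℕ} (f : Net n) (x : Config n) (i : Fin n) : Prop := f i x ≠ x i

/-- The arc `(j,i)` is frustrated in configuration `x`: `s(x_j)·s(x_i) = − sign(j,i)`. -/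
def frustrated {n : ℕ} (f : Net n) (x : Config n) (j i : Fin n) : Prop :=
  ∃ s : ℤ, hasSign f j i s ∧ sgn (x j) * sgn (x i) = -s

/-- `Δ(x,y)`: the set of coordinates where `x` and `y` differ. -/
def diff {n : ℕ} (x y : Config n) : Finset (Fin n) :=
  Finset.univ.filter fun i => x i ≠ y i

/-- `U(x)`: the set of unstable automata of `x`. -/
def U {n : ℕ} (f : Net n) (x : Config n) : Finset (Fin n) :=
  Finset.univ.filter fun i => f i x ≠ x i

/-- Elementary transition `x → y`: `∅ ≠ Δ(x,y) ⊆ U(x)`. -/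
def elemTrans {n : ℕ} (f : Net n) (x y : Config n) : Prop :=
  (diff x y).Nonempty ∧ diff x y ⊆ U f x

/-- Asynchronous (atomic) transition: flip one unstable coordinate. -/
def asyncStep {n : ℕ} (f : Net n) (x y : Config n) : Prop :=
  ∃ i, unstable f x i ∧ y = flip x i

/-- Asynchronous reachability (derivations). -/
def asyncReach {n : ℕ} (f : Net n) : Config n → Config n → Prop :=
  Relation.ReflTransGen (asyncStep f)

/-- `x ⇒ y` is sequentialisable: there is a chain of strictly smaller elementary
transitions from `x` to `y`. -/
def seqable {n : ℕ} (f : Net n) (x y : Config n) : Prop :=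
  ∃ l : List (Config n),
    l.Chain' (fun u v => elemTrans f u v ∧ (diff u v).card < (diff x y).card) ∧
    l.head? = some x ∧ l.getLast? = some y

/-- Non-sequentialisable (normal) synchronous transition. -/
def nonSeq {n : ℕ} (f : Net n) (x y : Config n) : Prop :=
  elemTrans f x y ∧ 2 ≤ (diff x y).card ∧ ¬ seqable f x y

/-- Cyclic successor on `Fin ℓ`. -/
def cnext {ℓ : ℕ} (k : Fin ℓ) : Fin ℓ := ⟨(k.val + 1) % ℓ, Nat.mod_lt _ k.pos⟩

/-- `c : Fin ℓ → Fin n` describes a cycle of the interaction graph of `f`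
(a closed walk with pairwise distinct arcs). -/
def isCycle {n : ℕ} (f : Net n) {ℓ : ℕ} (c : Fin ℓ → Fin n) : Prop :=
  0 < ℓ ∧ (∀ k, arc f (c k) (c (cnext k))) ∧
    Function.Injective (fun k => (c k, c (cnext k)))

/-- The cycle `c` is `x`-critical: all nodes unstable in `x`, all arcs frustrated in `x`. -/
def xCriticalCycle {n : ℕ} (f : Net n) (x : Config n) {ℓ : ℕ} (c : Fin ℓ → Fin n) : Prop :=
  isCycle f c ∧ (∀ k, unstable f x (c k)) ∧ ∀ k, frustrated f x (c k) (c (cnext k))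

/-- `x̄^S`: flip all coordinates of `x` in `S`. -/
def flipSet {n : ℕ} (x : Config n) (S : Finset (Fin n)) : Config n :=
  fun i => if i ∈ S then !x i else x i

/-- `x̄^V`. -/
def flipAll {n : ℕ} (x : Config n) : Config n := fun i => !x i

/-- Union of the first `t` blocks of a list of finsets. -/
def prefUnion {n : ℕ} (D : List (Finset (Fin n))) (t : ℕ) : Finset (Fin n) :=
  (D.take t).foldr (· ∪ ·) ∅

/-- `x ⇒ y` is totally sequentialisable: some ordering of `Δ(x,y)` gives a chain of
asynchronous transitions from `x` to `y`. -/
def totallySeq {n : ℕ} (f : Net n) (x y : Config n) : Prop :=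
  ∃ l : List (Fin n), l.Nodup ∧ l.toFinset = diff x y ∧
    ∀ t : Fin l.length, unstable f ((l.take t.val).foldl flip x) (l.get t)

/-- Attractor of the asynchronous transition graph: nonempty, closed, strongly
connected set of configurations (terminal SCC). -/
def isAttractor {n : ℕ} (f : Net n) (A : Set (Config n)) : Prop :=
  A.Nonempty ∧ (∀ a ∈ A, ∀ b, asyncStep f a b → b ∈ A) ∧
    ∀ a ∈ A, ∀ b ∈ A, asyncReach f a b

/-- A configuration is transient if it belongs to no attractor. -/
def transientCfg {n : ℕ} (f : Net n) (z : Config n) : Prop :=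
  ¬ ∃ A : Set (Config n), isAttractor f A ∧ z ∈ A

/-! Flip the coordinates of `Δ(x,y)` sinks first, in a reverse topological order of the
frustration digraph on `Δ(x,y)`. When `i` is flipped, no previously flipped `j` carries a
frustrated arc `(j,i)` in `x`; by local monotony, flipping `j` along a non-frustrated arc can only
push `f i` further away from `x i`, so `i` is still unstable. -/

end BAN

theorem List.Pairwise.rel_get_of_mem_take {α : Type*} {R : α → α → Prop} {l : List α}
    (h : l.Pairwise R) (t : Fin l.length) {a : α} (ha : a ∈ l.take t) : R a (l.get t) := by
  rw [← List.take_append_drop t l, List.pairwise_append] at h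
  exact h.2.2 a ha _ (by simpa using List.getElem_mem (l := l.drop t) (n := 0) (by simp))

theorem Finset.exists_list_pairwise_not_of_acyclic {α : Type*} [DecidableEq α] [Finite α]
    {r : α → α → Prop} (hr : ∀ a, ¬ Relation.TransGen r a a) (S : Finset α) :
    ∃ l : List α, l.Nodup ∧ l.toFinset = S ∧ l.Pairwise (fun a b => ¬ r a b) := by
  have : IsTrans α (fun a b => Relation.TransGen r b a) := ⟨fun _ _ _ h₁ h₂ => h₂.trans h₁⟩
  have : Std.Irrefl (fun a b => Relation.TransGen r b a) := ⟨hr⟩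
  have hwf := Finite.wellFounded_of_trans_of_irrefl (fun a b => Relation.TransGen r b a)
  induction S using Finset.strongInduction with
  | _ S ih =>
    rcases S.eq_empty_or_nonempty with rfl | hS
    · exact ⟨[], List.nodup_nil, rfl, List.Pairwise.nil⟩
    -- a sink `m` of `r` inside `S` may go first
    obtain ⟨m, hm, hsink⟩ := hwf.has_min S hS
    obtain ⟨l, hnd, hl, hpw⟩ := ih (S.erase m) (Finset.erase_ssubset hm)
    have hmem {b : α} (hb : b ∈ l) : b ∈ S.erase m := hl ▸ List.mem_toFinset.mpr hb
    refine ⟨m :: l, List.nodup_cons.mpr ⟨fun h => S.notMem_erase m (hmem h), hnd⟩, ?_, ?_⟩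
    · rw [List.toFinset_cons, hl, Finset.insert_erase hm]
    · exact List.pairwise_cons.mpr ⟨fun b hb hmb =>
        hsink b (Finset.mem_of_mem_erase (hmem hb)) (.single hmb), hpw⟩

namespace BAN

variable {n : ℕ}

theorem flip_apply_of_ne {x : Config n} {i j : Fin n} (h : i ≠ j) : flip x j i = x i :=
  Function.update_of_ne h _ _

theorem foldl_flip_apply_of_notMem {i : Fin n} :
    ∀ {L : List (Fin n)} {x : Config n}, i ∉ L → L.foldl flip x i = x i
  | [], _, _ => rfl
  | j :: L, x, hi => by
    rw [List.mem_cons, not_or] at hi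
    rw [List.foldl_cons, foldl_flip_apply_of_notMem hi.2, flip_apply_of_ne hi.1]

theorem posIn.apply_flip {f : Net n} {i j : Fin n} (h : posIn f i j) {z : Config n}
    (hz : f i z = !z j) : f i (flip z j) = !z j := by
  have := h z
  cases hzj : z j <;> cases hf : f i (flip z j) <;> simp_all [sgn, bint]

theorem negIu.apply_flip {f : Net n} {i j : Fin n} (h : negIu f i j) {z : Config n}
    (hz : f i z = z j) : f i (flip z j) = z j := by
  have := h z
  cases hzj : z j <;> cases hf : f i (flip z j) <;> simp_all [sgn, bint]

theorem frustrated_of_posIn {f : Net n} {x : Config n} {i j : Fin n} (ha : arc f j i)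
    (h : posIn f i j) (hx : x j ≠ x i) : frustrated f x j i :=
  ⟨1, ⟨ha, .inl ⟨rfl, h⟩⟩, by cases hj : x j <;> cases hi : x i <;> simp_all [sgn]⟩

theorem frustrated_of_negIu {f : Net n} {x : Config n} {i j : Fin n} (ha : arc f j i)
    (h : negIu f i j) (hx : x j = x i) : frustrated f x j i :=
  ⟨-1, ⟨ha, .inr ⟨rfl, h⟩⟩, by cases hj : x j <;> cases hi : x i <;> simp_all [sgn]⟩

theorem apply_flip_ne_of_not_frustrated {f : Net n} (hmono : MonotoneNet f) {x z : Config n}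
    {i j : Fin n} (hfr : ¬ frustrated f x j i) (hzj : z j = x j) (hz : f i z ≠ x i) :
    f i (flip z j) ≠ x i := by
  by_cases ha : arc f j i
  · rcases hmono i j with hpos | hneg
    · have hxji : x j = x i := by_contra (hfr ∘ frustrated_of_posIn ha hpos)
      rw [hpos.apply_flip (by rw [hzj, hxji]; exact Bool.eq_not.mpr hz), hzj, hxji]
      exact Bool.not_ne_self _
    · have hxji : x j ≠ x i := fun h => hfr (frustrated_of_negIu ha hneg h)
      rw [hneg.apply_flip (by rw [hzj, Bool.eq_not.mpr hxji]; exact Bool.eq_not.mpr hz), hzj]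
      exact hxji
  · simp only [arc, not_exists, not_not] at ha
    rwa [← ha z]

theorem apply_foldl_flip_ne_of_not_frustrated {f : Net n} (hmono : MonotoneNet f)
    {x : Config n} {i : Fin n} :
    ∀ {L : List (Fin n)} {z : Config n}, L.Nodup → (∀ j ∈ L, z j = x j) →
      (∀ j ∈ L, ¬ frustrated f x j i) → f i z ≠ x i → f i (L.foldl flip z) ≠ x i
  | [], _, _, _, _, hz => hz
  | j :: L, z, hnd, hzL, hfr, hz => by
    rw [List.nodup_cons] at hnd
    refine apply_foldl_flip_ne_of_not_frustrated (z := flip z j) hmono hnd.2 (fun k hk => ?_)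
      (fun k hk => hfr k (List.mem_cons_of_mem j hk))
      (apply_flip_ne_of_not_frustrated hmono (hfr j List.mem_cons_self)
        (hzL j List.mem_cons_self) hz)
    rw [flip_apply_of_ne (ne_of_mem_of_not_mem hk hnd.1)]
    exact hzL k (List.mem_cons_of_mem j hk)

theorem unstable_foldl_flip_of_not_frustrated {f : Net n} (hmono : MonotoneNet f)
    {x : Config n} {i : Fin n} {L : List (Fin n)} (hnd : L.Nodup) (hi : i ∉ L)
    (hfr : ∀ j ∈ L, ¬ frustrated f x j i) (hu : unstable f x i) :
    unstable f (L.foldl flip x) i := by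
  rw [unstable, foldl_flip_apply_of_notMem hi]
  exact apply_foldl_flip_ne_of_not_frustrated hmono hnd (fun _ _ => rfl) hfr hu

/-- an elementary transition whose frustration digraph on `Δ(x,y)`
is acyclic is totally sequentialisable. -/
theorem stmt5 {n : ℕ} (f : Net n) (hmono : MonotoneNet f) (x y : Config n)
    (ht : elemTrans f x y)
    (hacyc : ∀ i : Fin n, ¬ Relation.TransGen
      (fun j i' => j ∈ diff x y ∧ i' ∈ diff x y ∧ frustrated f x j i') i i) :
    totallySeq f x y := by
  obtain ⟨l, hnd, hl, hpw⟩ := Finset.exists_list_pairwise_not_of_acyclic hacyc (diff x y)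
  refine ⟨l, hnd, hl, fun t => ?_⟩
  have hdiff {j : Fin n} (hj : j ∈ l) : j ∈ diff x y := hl ▸ List.mem_toFinset.mpr hj
  refine unstable_foldl_flip_of_not_frustrated hmono (hnd.sublist (List.take_sublist _ _))
    (fun hi => hnd.rel_get_of_mem_take t hi rfl) (fun j hj hfr => ?_) ?_
  · exact hpw.rel_get_of_mem_take t hj
      ⟨hdiff (List.mem_of_mem_take hj), hdiff (l.get_mem t), hfr⟩
  · simpa [U, unstable] using ht.2 (hdiff (l.get_mem t))

end BAN
end

section
/- Let N be a monotone Boolean automata network such that every x-critical cycle (for any configuration x) has node set equal to the whole node set V. If x ⇒ y is a non-sequentialisable synchronous transition of N, then Δ(x,y) = V (equivalently y = x̄^V and U(x) = V). -/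
/-!
If `x ⇒ y` is non-sequentialisable, then for every `j ∈ Δ(x,y)` the two-step chain
`x → x̄^j → y` must fail, so updating `j` stabilises some other `i ∈ Δ(x,y)`; by local
monotonicity this makes the arc `(j,i)` frustrated in `x`. Every node of `Δ(x,y)` thus has a
frustrated out-arc inside `Δ(x,y)`, and following such arcs in the finite set `Δ(x,y)` closes
an `x`-critical cycle contained in `Δ(x,y)`. By hypothesis that cycle visits all of `V`.
-/

namespace BAN

open Function

theorem _root_.Function.periodicPts_nonempty {α : Type*} [Finite α] [Nonempty α] (g : α → α) :
    (periodicPts g).Nonempty := by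
  obtain ⟨p, q, hne, heq⟩ := Finite.exists_ne_map_eq_of_infinite (g^[·] (Classical.arbitrary α))
  wlog hpq : p < q generalizing p q
  · exact this q p hne.symm heq.symm (by omega)
  refine ⟨g^[p] (Classical.arbitrary α), mk_mem_periodicPts (Nat.sub_pos_of_lt hpq) ?_⟩
  change g^[q - p] (g^[p] _) = g^[p] _
  rw [← iterate_add_apply, Nat.sub_add_cancel hpq.le, heq]

variable {α : Type*} [Finite α]

theorem exists_injective_cycle [Nonempty α] (g : α → α) :
    ∃ (ℓ : ℕ) (c : Fin ℓ → α), 0 < ℓ ∧ Injective c ∧ ∀ k, c (cnext k) = g (c k) := by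
  obtain ⟨z, hz⟩ := periodicPts_nonempty g
  refine ⟨minimalPeriod g z, fun k => g^[k] z, minimalPeriod_pos_of_mem_periodicPts hz,
    fun a b hab => Fin.ext (iterate_injOn_Iio_minimalPeriod a.2 b.2 hab), fun k => ?_⟩
  simp only [cnext, iterate_mod_minimalPeriod_eq, iterate_succ_apply']

theorem exists_injective_cycle_of_forall_exists_rel {S : Set α} (hS : S.Nonempty)
    {r : α → α → Prop} (h : ∀ a ∈ S, ∃ b ∈ S, r a b) :
    ∃ (ℓ : ℕ) (c : Fin ℓ → α), 0 < ℓ ∧ Injective c ∧ ∀ k, c k ∈ S ∧ r (c k) (c (cnext k)) := by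
  have : Nonempty S := hS.to_subtype
  choose g hgS hgr using h
  obtain ⟨ℓ, c, hℓ, hinj, hc⟩ :=
    exists_injective_cycle fun a : S => (⟨g a a.2, hgS a a.2⟩ : S)
  refine ⟨ℓ, Subtype.val ∘ c, hℓ, Subtype.val_injective.comp hinj, fun k => ⟨(c k).2, ?_⟩⟩
  simp only [comp_apply, hc k]
  exact hgr _ _

variable {n : ℕ} {f : Net n} {x y : Config n} {i j : Fin n}

theorem mem_diff : i ∈ diff x y ↔ x i ≠ y i := by
  simp [diff]

theorem mem_U : i ∈ U f x ↔ unstable f x i := by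
  simp [U, unstable]

theorem flip_apply (x : Config n) (j i : Fin n) :
    flip x j i = if i = j then !x j else x i := by
  simp [flip, Function.update_apply]

theorem diff_flip_self (x : Config n) (j : Fin n) : diff x (flip x j) = {j} := by
  ext i
  by_cases h : i = j <;> simp [mem_diff, flip_apply, h]

theorem diff_flip_left (hj : j ∈ diff x y) : diff (flip x j) y = (diff x y).erase j := by
  ext i
  by_cases h : i = j
  · subst h
    have hy : y i = !x i := Bool.eq_not_iff.mpr (mem_diff.mp hj).symm
    simp [mem_diff, flip_apply, hy]
  · simp [mem_diff, flip_apply, h]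

theorem elemTrans_flip (hj : unstable f x j) : elemTrans f x (flip x j) := by
  rw [elemTrans, diff_flip_self, Finset.singleton_subset_iff, mem_U]
  exact ⟨Finset.singleton_nonempty j, hj⟩

theorem seqable_of_elemTrans_elemTrans {z : Config n} (hxz : elemTrans f x z)
    (hzy : elemTrans f z y) (hxz_lt : (diff x z).card < (diff x y).card)
    (hzy_lt : (diff z y).card < (diff x y).card) : seqable f x y :=
  ⟨[x, z, y], List.isChain_cons_cons.mpr ⟨⟨hxz, hxz_lt⟩,
    List.isChain_cons_cons.mpr ⟨⟨hzy, hzy_lt⟩, List.isChain_singleton y⟩⟩, rfl, rfl⟩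

theorem frustrated_of_flip_stable (hmono : MonotoneNet f) (hi : unstable f x i)
    (hflip : f i (flip x j) = x i) : frustrated f x j i := by
  have hfx : f i x = !x i := Bool.eq_not_iff.mpr hi
  have harc : arc f j i := ⟨x, by rw [hflip, hfx]; cases x i <;> simp⟩
  rcases hmono i j with hpos | hneg
  · refine ⟨1, ⟨harc, Or.inl ⟨rfl, hpos⟩⟩, ?_⟩
    have h := hpos x
    rw [hfx, hflip] at h
    cases hxj : x j <;> cases hxi : x i <;> rw [hxj, hxi] at h <;> simp [sgn, bint] at h ⊢
  · refine ⟨-1, ⟨harc, Or.inr ⟨rfl, hneg⟩⟩, ?_⟩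
    have h := hneg x
    rw [hfx, hflip] at h
    cases hxj : x j <;> cases hxi : x i <;> rw [hxj, hxi] at h <;> simp [sgn, bint] at h ⊢

theorem exists_frustrated_of_nonSeq (hmono : MonotoneNet f) (hns : nonSeq f x y)
    (hj : j ∈ diff x y) : ∃ i ∈ diff x y, frustrated f x j i := by
  obtain ⟨⟨-, hsub⟩, hcard, hnseq⟩ := hns
  by_contra! hnone
  have hcard_erase := Finset.card_erase_of_mem hj
  refine hnseq (seqable_of_elemTrans_elemTrans (elemTrans_flip (mem_U.mp (hsub hj)))
    ⟨?_, fun i hi => ?_⟩ ?_ ?_)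
  · rw [diff_flip_left hj, ← Finset.card_pos]
    omega
  · rw [diff_flip_left hj, Finset.mem_erase] at hi
    have hfix : flip x j i = x i := by simp [flip_apply, hi.1]
    rw [mem_U, unstable, hfix]
    exact fun hstable =>
      hnone i hi.2 (frustrated_of_flip_stable hmono (mem_U.mp (hsub hi.2)) hstable)
  · rw [diff_flip_self, Finset.card_singleton]
    omega
  · rw [diff_flip_left hj]
    omega

theorem xCriticalCycle_of_injective {ℓ : ℕ} {c : Fin ℓ → Fin n} (hℓ : 0 < ℓ)
    (hinj : Injective c) (hunst : ∀ k, unstable f x (c k))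
    (hfrus : ∀ k, frustrated f x (c k) (c (cnext k))) : xCriticalCycle f x c := by
  refine ⟨⟨hℓ, fun k => ?_, fun a b hab => hinj (Prod.ext_iff.mp hab).1⟩, hunst, hfrus⟩
  obtain ⟨s, hs, -⟩ := hfrus k
  exact hs.1

/-- if every critical cycle of `N` has node set `V`, then any
non-sequentialisable transition `x ⇒ y` satisfies `Δ(x,y) = V`. -/
theorem stmt7 {n : ℕ} (f : Net n) (hmono : MonotoneNet f)
    (hcrit : ∀ (z : Config n) (ℓ : ℕ) (c : Fin ℓ → Fin n),
      xCriticalCycle f z c → ∀ i : Fin n, ∃ k, c k = i)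
    (x y : Config n) (hns : nonSeq f x y) :
    diff x y = Finset.univ := by
  obtain ⟨ℓ, c, hℓ, hinj, hc⟩ :=
    exists_injective_cycle_of_forall_exists_rel (Finset.coe_nonempty.mpr hns.1.1)
      fun j hj => exists_frustrated_of_nonSeq hmono hns hj
  have hcritical : xCriticalCycle f x c :=
    xCriticalCycle_of_injective hℓ hinj (fun k => mem_U.mp (hns.1.2 (hc k).1)) fun k => (hc k).2
  refine Finset.eq_univ_of_forall fun i => ?_
  obtain ⟨k, rfl⟩ := hcrit x ℓ c hcritical i
  exact (hc k).1

end BAN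
end

section
/- Consider the Boolean automata network N of size 4 with f_0(x) = x_2 ∨ (x_0 ∧ ¬x_1), f_1(x) = x_3 ∨ (¬x_0 ∧ x_1), f_2(x) = ¬x_0 ∧ x_1, f_3(x) = x_0 ∧ ¬x_1. Then: (a) the configuration 0000 is stable; (b) the set T = {x ∈ {0,1}^4 : x_0 ∨ x_1 = 1} is closed under asynchronous transitions (if x ∈ T and i ∈ U(x) then x̄^i ∈ T); (c) the transition 1100 ⇒ 0000 is a valid synchronous elementary transition (i.e., {0,1} ⊆ U(1100)); and therefore (d) 1100 ⇒ 0000 is non-sequentialisable, since 0000 ∉ T but 1100 ∈ T and all asynchronous derivations from 1100 stay in T. -/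
namespace BAN

/-! The set `T = {x | x₀ ∨ x₁}` is a trap set of the asynchronous dynamics: it contains `1100`
but not `0000`. Since `1100` and `0000` differ in two coordinates, a decomposition of
`1100 ⇒ 0000` into strictly smaller elementary transitions consists of asynchronous steps,
so it would be an asynchronous path leaving `T`. -/

theorem _root_.List.relationReflTransGen_of_isChain_of_head?_of_getLast? {α : Type*}
    {r : α → α → Prop} {l : List α} {x y : α} (hl : l.IsChain r) (hx : l.head? = some x)
    (hy : l.getLast? = some y) : Relation.ReflTransGen r x y := by
  have hne : l ≠ [] := by rintro rfl; simp at hx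
  rw [← (List.head_eq_iff_head?_eq_some hne).2 hx,
    ← (List.getLast_eq_iff_getLast?_eq_some hne).2 hy]
  exact List.relationReflTransGen_of_exists_isChain l hl hne

variable {n : ℕ} {f : Net n}

lemma mem_of_asyncReach {T : Set (Config n)}
    (hT : ∀ x ∈ T, ∀ i, unstable f x i → flip x i ∈ T) {x y : Config n} (hx : x ∈ T)
    (h : asyncReach f x y) : y ∈ T := by
  induction h with
  | refl => exact hx
  | tail _ step ih =>
    obtain ⟨i, hi, rfl⟩ := step
    exact hT _ ih i hi

lemma asyncStep_of_elemTrans_of_card_le_one {x y : Config n} (h : elemTrans f x y)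
    (hc : (diff x y).card ≤ 1) : asyncStep f x y := by
  obtain ⟨hne, hsub⟩ := h
  obtain ⟨i, hi⟩ := Finset.card_eq_one.mp (le_antisymm hc (Finset.one_le_card.mpr hne))
  have hU : i ∈ U f x := hsub (hi ▸ Finset.mem_singleton_self i)
  refine ⟨i, by simpa [U, unstable] using hU, funext fun j => ?_⟩
  have hj : x j ≠ y j ↔ j = i := by simpa [diff] using Finset.ext_iff.mp hi j
  by_cases hji : j = i
  · subst hji
    simpa [flip] using Bool.eq_not.mpr (hj.2 rfl).symm
  · simpa [flip, hji] using (not_not.mp (mt hj.1 hji)).symm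

lemma asyncReach_of_seqable_of_card_le_two {x y : Config n} (h : seqable f x y)
    (hc : (diff x y).card ≤ 2) : asyncReach f x y := by
  obtain ⟨l, hl, hx, hy⟩ := h
  refine List.relationReflTransGen_of_isChain_of_head?_of_getLast?
    (hl.imp fun u v ⟨huv, hlt⟩ => ?_) hx hy
  exact asyncStep_of_elemTrans_of_card_le_one huv (by omega)

lemma nonSeq_of_not_asyncReach {x y : Config n} (h : elemTrans f x y)
    (hc : (diff x y).card = 2) (hr : ¬ asyncReach f x y) : nonSeq f x y :=
  ⟨h, hc.ge, fun hs => hr (asyncReach_of_seqable_of_card_le_two hs hc.le)⟩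

/-- the size-4 network of the paper's main example: `0000` is stable,
`T = {x : x_0 ∨ x_1 = 1}` is closed under asynchronous transitions, `1100 ⇒ 0000` is a
valid synchronous elementary transition, `0000` is not asynchronously reachable from
`1100`, and the transition is non-sequentialisable. -/
theorem stmt15 :
    let f : Net 4 := fun i x =>
      if i = 0 then x 2 || (x 0 && !(x 1))
      else if i = 1 then x 3 || (!(x 0) && x 1)
      else if i = 2 then !(x 0) && x 1
      else x 0 && !(x 1)
    let a : Config 4 := ![true, true, false, false]
    let b : Config 4 := ![false, false, false, false]
    (∀ i, f i b = b i) ∧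
    (∀ x : Config 4, (x 0 = true ∨ x 1 = true) → ∀ i, unstable f x i →
      ((flip x i) 0 = true ∨ (flip x i) 1 = true)) ∧
    elemTrans f a b ∧ (0 : Fin 4) ∈ U f a ∧ (1 : Fin 4) ∈ U f a ∧
    ¬ asyncReach f a b ∧ nonSeq f a b := by
  intro f a b
  have hT : ∀ x : Config 4, (x 0 = true ∨ x 1 = true) → ∀ i, unstable f x i →
      ((flip x i) 0 = true ∨ (flip x i) 1 = true) := by unfold unstable; decide
  have hab : elemTrans f a b := by unfold elemTrans; decide
  have hunreach : ¬ asyncReach f a b := fun h => by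
    simpa [b] using mem_of_asyncReach (T := {x | x 0 = true ∨ x 1 = true}) hT (by simp [a]) h
  exact ⟨by decide, hT, hab, by decide, by decide, hunreach,
    nonSeq_of_not_asyncReach hab (by decide) hunreach⟩

end BAN
end

section
/- Let N be a monotone Boolean automata network whose signed interaction graph contains no cycle that is positive of even length and no cycle that is negative of odd length. Then no cycle of N is critical, and consequently every synchronous elementary transition of N is totally sequentialisable (N has no non-sequentialisable transition). -/
namespace BAN

/-
A frustrated arc of a critical cycle has sign `-s(x_j)s(x_i)`, so the sign of a critical cycle of
length `ℓ` is `(-1)^ℓ ∏ s(x_{c_k})^2 = (-1)^ℓ`; the hypothesis on the interaction graph rules out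
exactly these cycles.

For the sequentialisation, suppose no cycle is `x`-critical. Then the frustrated arcs between the
unstable nodes of `Δ(x,y)` form an acyclic relation, so `Δ(x,y)` can be listed so that no
frustrated arc goes from an earlier node to a later one. Flip the nodes in that order. By local
monotonicity, a node `i` that is unstable in `x` can only be stabilised by flipping a set `S` of
nodes if some `j ∈ S` has a frustrated arc `(j,i)`; hence each node is still unstable when its
turn comes.
-/

section Flip

variable {n : ℕ}

lemma flipSet_empty (x : Config n) : flipSet x ∅ = x := by
  funext i; simp [flipSet]

lemma flipSet_apply_of_notMem (x : Config n) {S : Finset (Fin n)} {i : Fin n} (h : i ∉ S) :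
    flipSet x S i = x i := by
  simp [flipSet, h]

lemma flip_flipSet (x : Config n) {S : Finset (Fin n)} {a : Fin n} (h : a ∉ S) :
    flip (flipSet x S) a = flipSet x (insert a S) := by
  funext i
  by_cases hia : i = a
  · subst hia; simp [flip, flipSet, h]
  · simp [flip, Function.update, hia, flipSet]

lemma flipSet_flip (x : Config n) {T : Finset (Fin n)} {a : Fin n} (h : a ∉ T) :
    flipSet (flip x a) T = flipSet x (insert a T) := by
  funext i
  by_cases hia : i = a
  · subst hia; simp [flipSet, flip, h]
  · simp [flipSet, flip, Function.update, hia]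

lemma foldl_flip_eq_flipSet (x : Config n) {l : List (Fin n)} (hl : l.Nodup) :
    l.foldl flip x = flipSet x l.toFinset := by
  induction l generalizing x with
  | nil => simp [flipSet_empty]
  | cons a l ih =>
    rw [List.nodup_cons] at hl
    rw [List.foldl_cons, ih (flip x a) hl.2, List.toFinset_cons]
    exact flipSet_flip x (by simpa using hl.1)

end Flip

section Monotone

variable {n : ℕ} {f : Net n}

lemma frustrated_of_flip_stabilises (hmono : MonotoneNet f) {x w : Config n} {i j : Fin n}
    (hwj : w j = x j) (hw : f i w ≠ x i) (hflip : f i (flip w j) = x i) :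
    frustrated f x j i := by
  have hfw : f i w = !x i := by cases hfw : f i w <;> cases hxi : x i <;> simp_all
  have harc : arc f j i := ⟨w, by rw [hfw, hflip]; cases x i <;> simp⟩
  rcases hmono i j with hpos | hneg
  · refine ⟨1, ⟨harc, Or.inl ⟨rfl, hpos⟩⟩, ?_⟩
    have h := hpos w
    rw [hfw, hflip, hwj] at h
    cases hxi : x i <;> cases hxj : x j <;> simp [hxi, hxj, sgn, bint] at h ⊢
  · refine ⟨-1, ⟨harc, Or.inr ⟨rfl, hneg⟩⟩, ?_⟩
    have h := hneg w
    rw [hfw, hflip, hwj] at h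
    cases hxi : x i <;> cases hxj : x j <;> simp [hxi, hxj, sgn, bint] at h ⊢

lemma exists_frustrated_of_flipSet_stabilises (hmono : MonotoneNet f) {x : Config n} {i : Fin n}
    (hi : unstable f x i) (S : Finset (Fin n)) (hS : f i (flipSet x S) = x i) :
    ∃ j ∈ S, frustrated f x j i := by
  induction S using Finset.induction_on with
  | empty => exact absurd (by rwa [flipSet_empty] at hS) hi
  | insert a T haT ih =>
    by_cases hT : f i (flipSet x T) = x i
    · obtain ⟨j, hjT, hj⟩ := ih hT
      exact ⟨j, Finset.mem_insert_of_mem hjT, hj⟩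
    · refine ⟨a, Finset.mem_insert_self a T, ?_⟩
      exact frustrated_of_flip_stabilises hmono (flipSet_apply_of_notMem x haT) hT
        (by rwa [flip_flipSet x haT])

lemma unstable_flipSet (hmono : MonotoneNet f) {x : Config n} {i : Fin n} {S : Finset (Fin n)}
    (hi : unstable f x i) (hiS : i ∉ S) (hS : ∀ j ∈ S, ¬ frustrated f x j i) :
    unstable f (flipSet x S) i := by
  intro hstable
  rw [flipSet_apply_of_notMem x hiS] at hstable
  obtain ⟨j, hjS, hj⟩ := exists_frustrated_of_flipSet_stabilises hmono hi S hstable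
  exact hS j hjS hj

end Monotone

section Cycles

lemma cnext_eq_finRotate {ℓ : ℕ} (k : Fin ℓ) : cnext k = finRotate ℓ k := by
  obtain ⟨m, rfl⟩ : ∃ m, ℓ = m + 1 := Nat.exists_eq_add_one.mpr k.pos
  ext
  simp [cnext, Fin.val_add]

lemma prod_comp_cnext {M : Type*} [CommMonoid M] {ℓ : ℕ} (g : Fin ℓ → M) :
    ∏ k, g (cnext k) = ∏ k, g k := by
  simp only [cnext_eq_finRotate]
  exact Fintype.prod_equiv (finRotate ℓ) _ _ fun _ => rfl

lemma exists_iterate_mem_periodicPts {α : Type*} [Finite α] (g : α → α) (x : α) :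
    ∃ m, g^[m] x ∈ Function.periodicPts g := by
  obtain ⟨m, n, hmn, h⟩ := Finite.exists_ne_map_eq_of_infinite (g^[·] x)
  wlog hlt : m < n generalizing m n
  · exact this n m hmn.symm h.symm (by omega)
  refine ⟨m, Function.mk_mem_periodicPts (Nat.sub_pos_of_lt hlt) ?_⟩
  change g^[n - m] (g^[m] x) = g^[m] x
  rw [← Function.iterate_add_apply, Nat.sub_add_cancel hlt.le]
  exact h.symm

/-- The cycle is the orbit of a periodic point of a successor function. -/
lemma exists_injective_cycle_s19 {α : Type*} [Finite α] (r : α → α → Prop) (Δ : Finset α)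
    (hne : Δ.Nonempty) (h : ∀ i ∈ Δ, ∃ k ∈ Δ, r i k) :
    ∃ (ℓ : ℕ) (c : Fin ℓ → α), 0 < ℓ ∧ Function.Injective c ∧ (∀ k, c k ∈ Δ) ∧
      ∀ k, r (c k) (c (cnext k)) := by
  choose! g hgΔ hgr using h
  obtain ⟨i₀, hi₀⟩ := hne
  obtain ⟨m, hp⟩ := exists_iterate_mem_periodicPts g i₀
  set p := g^[m] i₀
  have hmaps : Set.MapsTo g Δ Δ := fun i hi => hgΔ i hi
  have hpΔ : p ∈ Δ := hmaps.iterate m hi₀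
  refine ⟨Function.minimalPeriod g p, fun k => g^[k] p,
    Function.minimalPeriod_pos_of_mem_periodicPts hp, ?_, fun k => hmaps.iterate k hpΔ, ?_⟩
  · intro k k' hkk'
    exact Fin.ext (Function.iterate_injOn_Iio_minimalPeriod k.isLt k'.isLt hkk')
  · intro k
    have hsucc : g^[(cnext k).val] p = g (g^[k] p) := by
      rw [cnext, Function.iterate_mod_minimalPeriod_eq, Function.iterate_succ_apply']
    change r (g^[k] p) (g^[(cnext k).val] p)
    rw [hsucc]
    exact hgr _ (hmaps.iterate k hpΔ)

lemma exists_nodup_pairwise_of_no_cycle {α : Type*} [Finite α] [DecidableEq α] (r : α → α → Prop)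
    (Δ : Finset α) (hacyc : ∀ (ℓ : ℕ) (c : Fin ℓ → α), 0 < ℓ → Function.Injective c →
      (∀ k, c k ∈ Δ) → ¬ ∀ k, r (c k) (c (cnext k))) :
    ∃ l : List α, l.Nodup ∧ l.toFinset = Δ ∧ l.Pairwise (fun j i => ¬ r j i) := by
  induction Δ using Finset.strongInduction with
  | H Δ ih =>
    rcases Δ.eq_empty_or_nonempty with rfl | hne
    · exact ⟨[], by simp⟩
    have hsink : ∃ i ∈ Δ, ∀ k ∈ Δ, ¬ r i k := by
      by_contra! hserial
      obtain ⟨ℓ, c, hpos, hinj, hmem, hrel⟩ := exists_injective_cycle_s19 r Δ hne hserial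
      exact hacyc ℓ c hpos hinj hmem hrel
    obtain ⟨i, hiΔ, hi⟩ := hsink
    obtain ⟨l, hnd, hl, hpw⟩ := ih (Δ.erase i) (Finset.erase_ssubset hiΔ)
      fun ℓ c hpos hinj hmem => hacyc ℓ c hpos hinj fun k => Finset.mem_of_mem_erase (hmem k)
    have hmem : ∀ {j}, j ∈ l ↔ j ∈ Δ.erase i := by
      intro j; rw [← hl, List.mem_toFinset]
    refine ⟨i :: l, ?_, ?_, ?_⟩
    · exact List.nodup_cons.mpr ⟨fun h => Finset.notMem_erase i Δ (hmem.mp h), hnd⟩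
    · rw [List.toFinset_cons, hl, Finset.insert_erase hiΔ]
    · exact List.pairwise_cons.mpr
        ⟨fun j hj => hi j (Finset.mem_of_mem_erase (hmem.mp hj)), hpw⟩

lemma _root_.List.Pairwise.rel_get_of_mem_take_s19 {α : Type*} {R : α → α → Prop} {l : List α}
    (h : l.Pairwise R) (t : Fin l.length) {a : α} (ha : a ∈ l.take t) : R a (l.get t) := by
  rw [← List.take_append_drop t.val l, List.pairwise_append] at h
  exact h.2.2 a ha _ (by rw [List.drop_eq_getElem_cons t.isLt]; exact List.mem_cons_self)

end Cycles

section Critical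

variable {n : ℕ} {f : Net n}

lemma sgn_mul_self (b : Bool) : sgn b * sgn b = 1 := by cases b <;> simp [sgn]

lemma arc_of_frustrated {x : Config n} {j i : Fin n} (h : frustrated f x j i) : arc f j i :=
  let ⟨_, hs, _⟩ := h
  hs.1

lemma exists_signs_prod_eq_neg_one_pow {x : Config n} {ℓ : ℕ} {c : Fin ℓ → Fin n}
    (hc : xCriticalCycle f x c) :
    ∃ σ : Fin ℓ → ℤ, (∀ k, hasSign f (c k) (c (cnext k)) (σ k)) ∧ ∏ k, σ k = (-1) ^ ℓ := by
  choose σ hσ hfr using hc.2.2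
  refine ⟨σ, hσ, ?_⟩
  have hσ_eq : ∀ k, σ k = -1 * (sgn (x (c k)) * sgn (x (c (cnext k)))) := fun k => by
    rw [hfr k]; ring
  calc ∏ k, σ k
      = (-1) ^ ℓ * ((∏ k, sgn (x (c k))) * ∏ k, sgn (x (c (cnext k)))) := by
        simp only [hσ_eq, Finset.prod_mul_distrib, Finset.prod_const, Finset.card_univ,
          Fintype.card_fin]
    _ = (-1) ^ ℓ := by
        rw [prod_comp_cnext (fun k => sgn (x (c k))), ← Finset.prod_mul_distrib]
        simp [sgn_mul_self]

lemma not_xCriticalCycle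
    (hnocyc : ∀ (ℓ : ℕ) (c : Fin ℓ → Fin n) (σ : Fin ℓ → ℤ),
      isCycle f c → (∀ k, hasSign f (c k) (c (cnext k)) (σ k)) →
      ¬ ((∏ k, σ k) = 1 ∧ Even ℓ) ∧ ¬ ((∏ k, σ k) = -1 ∧ Odd ℓ))
    (x : Config n) (ℓ : ℕ) (c : Fin ℓ → Fin n) : ¬ xCriticalCycle f x c := by
  intro hc
  obtain ⟨σ, hσ, hprod⟩ := exists_signs_prod_eq_neg_one_pow hc
  obtain ⟨hnot_pos_even, hnot_neg_odd⟩ := hnocyc ℓ c σ hc.1 hσ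
  rcases Nat.even_or_odd ℓ with hℓ | hℓ
  · exact hnot_pos_even ⟨by rw [hprod, hℓ.neg_one_pow], hℓ⟩
  · exact hnot_neg_odd ⟨by rw [hprod, hℓ.neg_one_pow], hℓ⟩

lemma totallySeq_of_forall_not_xCriticalCycle (hmono : MonotoneNet f) {x y : Config n}
    (hx : ∀ (ℓ : ℕ) (c : Fin ℓ → Fin n), ¬ xCriticalCycle f x c) (hxy : elemTrans f x y) :
    totallySeq f x y := by
  have hΔ : ∀ i ∈ diff x y, unstable f x i := fun i hi => by
    simpa [U, unstable] using hxy.2 hi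
  obtain ⟨l, hnd, hl, hpw⟩ := exists_nodup_pairwise_of_no_cycle (frustrated f x) (diff x y)
    fun ℓ c hpos hinj hmem hfr =>
      hx ℓ c ⟨⟨hpos, fun k => arc_of_frustrated (hfr k), fun k k' h => hinj (congrArg Prod.fst h)⟩,
        fun k => hΔ _ (hmem k), hfr⟩
  refine ⟨l, hnd, hl, fun t => ?_⟩
  rw [foldl_flip_eq_flipSet x ((List.take_sublist _ _).nodup hnd)]
  refine unstable_flipSet hmono (hΔ _ (hl ▸ List.mem_toFinset.mpr (l.get_mem t))) ?_ ?_
  · rw [List.mem_toFinset]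
    exact fun hmem => List.nodup_iff_pairwise_ne.mp hnd |>.rel_get_of_mem_take t hmem rfl
  · intro j hj
    exact hpw.rel_get_of_mem_take_s19 t (List.mem_toFinset.mp hj)

end Critical

/-- if the signed interaction graph has no positive cycle of even length
and no negative cycle of odd length, then no cycle is critical and every synchronous
elementary transition is totally sequentialisable. -/
theorem stmt19 {n : ℕ} (f : Net n) (hmono : MonotoneNet f)
    (hnocyc : ∀ (ℓ : ℕ) (c : Fin ℓ → Fin n) (σ : Fin ℓ → ℤ),
      isCycle f c → (∀ k, hasSign f (c k) (c (cnext k)) (σ k)) →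
      ¬ ((∏ k, σ k) = 1 ∧ Even ℓ) ∧ ¬ ((∏ k, σ k) = -1 ∧ Odd ℓ)) :
    (∀ (x : Config n) (ℓ : ℕ) (c : Fin ℓ → Fin n), ¬ xCriticalCycle f x c) ∧
    (∀ x y, elemTrans f x y → 2 ≤ (diff x y).card → totallySeq f x y) :=
  ⟨not_xCriticalCycle hnocyc, fun x _ hxy _ =>
    totallySeq_of_forall_not_xCriticalCycle hmono (not_xCriticalCycle hnocyc x) hxy⟩

end BAN
end
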